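/- arXiv:1912.04027 — 3 statements merged into one kernel-verified Lean document; each statement's English description precedes it below -/
import Mathlib

section
/- Consider the Furuta pendulum system [I + m(L + l²·sin²φ)]·ψ̈ + mlL·cos φ·φ̈ + (1/2)ml²·φ̇·sin 2φ·ψ̇ + [−mlL·sin φ + (1/2)ml²·sin 2φ·ψ̇]·φ̇ = u(φ, φ̇, ψ, ψ̇) and mlL·cos φ·ψ̈ + ml²·φ̈ − (1/2)ml²·sin 2φ·ψ̇·φ̇ − mgl·sin φ = 0, with positive constants I, L, l, m, g and u : ℝ⁴ → ℝ. Assume the solutions define a continuous semi-flow on ℝ⁴ and u is smooth in a neighborhood of the sets {φ = π/2} and {φ = −π/2}. If (φ, φ̇, ψ, ψ̇) = (0, 0, ψ₀, 0) is a Lyapunov stable equilibrium, then it is not globally attractive: there exists a solution with −π/2 < φ(t) < π/2 for all t ≥ 0 that does not converge to the equilibrium. -/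
/-!
Ważewski's retract argument. Suppose every trajectory that stays in the strip `|φ| < π/2`
converges to the equilibrium `e`, and follow the segment of initial states `(s, 0, ψ₀, 0)`,
`|s| ≤ π/2`. A trajectory from the segment either stays in the strip, and then enters a
neighbourhood of `e` whose forward orbits never leave the strip, or it reaches `φ = ±π/2`.
There `φ̈ = (g/l) sin φ` has the sign of `φ`, so the trajectory crosses strictly to `|φ| > π/2`.
Settling, exiting upwards and exiting downwards are open, pairwise exclusive conditions
covering the connected segment, and its two endpoints exit in opposite directions:
a contradiction.
-/

open Set Filter Topology Real

lemma HasDerivWithinAt.nonneg_of_forall_Ico_le {f : ℝ → ℝ} {d a t : ℝ} (hat : a < t)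
    (hf : HasDerivWithinAt f d (Ici a) t) (hle : ∀ τ ∈ Ico a t, f τ ≤ f t) : 0 ≤ d := by
  have hslope : Tendsto (slope f t) (𝓝[Ico a t] t) (𝓝 d) :=
    (hasDerivWithinAt_iff_tendsto_slope.mp hf).mono_left
      (nhdsWithin_mono _ fun τ hτ => ⟨hτ.1, hτ.2.ne⟩)
  have : (𝓝[Ico a t] t).NeBot := right_nhdsWithin_Ico_neBot hat
  refine ge_of_tendsto hslope (eventually_nhdsWithin_of_forall fun τ hτ => ?_)
  rw [slope_def_field]
  exact div_nonneg_of_nonpos (sub_nonpos.mpr (hle τ hτ)) (sub_nonpos.mpr hτ.2.le)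

lemma exists_forall_Ioc_lt_of_hasDerivWithinAt {f v : ℝ → ℝ} {a t c : ℝ} (hat : a ≤ t)
    (hf : ∀ τ ≥ a, HasDerivWithinAt f (v τ) (Ici a) τ) (hv : HasDerivWithinAt v c (Ici a) t)
    (hc : 0 < c) (hvt : 0 ≤ v t) : ∃ w > t, ∀ τ ∈ Ioc t w, f t < f τ := by
  have hslope : ∀ᶠ τ in 𝓝[>] t, 0 < slope v t τ :=
    ((hasDerivWithinAt_iff_tendsto_slope.mp hv).mono_left (nhdsWithin_mono _
      fun τ hτ => ⟨hat.trans (le_of_lt hτ), ne_of_gt hτ⟩)).eventually (eventually_gt_nhds hc)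
  obtain ⟨w, hw, hpos⟩ := mem_nhdsGT_iff_exists_Ioc_subset.mp hslope
  have hsub : Icc t w ⊆ Ici a := fun τ hτ => hat.trans hτ.1
  have hmono : StrictMonoOn f (Icc t w) := by
    refine strictMonoOn_of_hasDerivWithinAt_pos (f' := v) (convex_Icc t w)
      (fun τ hτ => (hf τ (hsub hτ)).continuousWithinAt.mono hsub) (fun τ hτ => ?_) fun τ hτ => ?_
    · rw [interior_Icc] at hτ
      exact (hf τ (hsub (Ioo_subset_Icc_self hτ))).mono (interior_subset.trans hsub)
    · rw [interior_Icc] at hτ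
      have h : 0 < slope v t τ := hpos (Ioo_subset_Ioc_self hτ)
      rw [slope_def_field, div_pos_iff_of_pos_right (sub_pos.mpr hτ.1)] at h
      linarith
  exact ⟨w, hw, fun τ hτ => hmono (left_mem_Icc.mpr hw.le) (Ioc_subset_Icc_self hτ) hτ.1⟩

lemma exists_first_hit {g : ℝ → ℝ} {b : ℝ} (hg : ContinuousOn g (Ici 0)) (h0 : g 0 ≤ b)
    (hhit : ∃ t ≥ 0, b ≤ g t) : ∃ t₀ ≥ 0, g t₀ = b ∧ ∀ τ ∈ Ico 0 t₀, g τ < b := by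
  set E := Ici 0 ∩ g ⁻¹' Ici b
  have hE : IsClosed E := hg.preimage_isClosed_of_isClosed isClosed_Ici isClosed_Ici
  have hbdd : BddBelow E := ⟨0, fun t ht => ht.1⟩
  obtain ⟨t, ht, hbt⟩ := hhit
  have hmem : sInf E ∈ E := hE.csInf_mem ⟨t, ht, hbt⟩ hbdd
  obtain ⟨c, hc, hgc⟩ := intermediate_value_Icc hmem.1 (hg.mono Icc_subset_Ici_self) ⟨h0, hmem.2⟩
  have hc_eq : c = sInf E := le_antisymm hc.2 (csInf_le hbdd ⟨hc.1, hgc.ge⟩)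
  refine ⟨sInf E, hmem.1, hc_eq ▸ hgc, fun τ hτ => not_le.mp fun h => ?_⟩
  exact (csInf_le hbdd ⟨hτ.1, h⟩).not_gt hτ.2

lemma exists_exit_above_of_first_hit {f v : ℝ → ℝ} {a b t₀ : ℝ} (hb : 0 < b) (ht₀ : 0 ≤ t₀)
    (hf : ∀ t ≥ 0, HasDerivWithinAt f (v t) (Ici 0) t) (hv0 : v 0 = 0)
    (hv : HasDerivWithinAt v a (Ici 0) t₀) (ha : 0 < a)
    (hft₀ : f t₀ = b) (hbefore : ∀ τ ∈ Ico 0 t₀, |f τ| < b) :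
    ∃ w ≥ 0, b < f w ∧ ∀ τ ∈ Icc 0 w, -b < f τ := by
  have hvt₀ : 0 ≤ v t₀ := by
    rcases ht₀.eq_or_lt with rfl | hpos
    · exact hv0.ge
    · refine (hf t₀ ht₀).nonneg_of_forall_Ico_le hpos fun τ hτ => ?_
      exact hft₀ ▸ (abs_lt.mp (hbefore τ hτ)).2.le
  obtain ⟨w, hw, hgt⟩ := exists_forall_Ioc_lt_of_hasDerivWithinAt ht₀ hf hv ha hvt₀
  refine ⟨w, ht₀.trans hw.le, hft₀ ▸ hgt w ⟨hw, le_rfl⟩, fun τ hτ => ?_⟩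
  rcases lt_or_ge τ t₀ with hτt | hτt
  · exact (abs_lt.mp (hbefore τ ⟨hτ.1, hτt⟩)).1
  have : f t₀ ≤ f τ := hτt.eq_or_lt.elim (fun h => h ▸ le_rfl) fun h => (hgt τ ⟨h, hτ.2⟩).le
  linarith

theorem exists_exit_of_mul_accel_pos {f v : ℝ → ℝ} {b : ℝ}
    (hf : ∀ t ≥ 0, HasDerivWithinAt f (v t) (Ici 0) t)
    (hacc : ∀ t ≥ 0, |f t| = b → ∃ a, HasDerivWithinAt v a (Ici 0) t ∧ 0 < f t * a)
    (h0 : |f 0| ≤ b) (hv0 : v 0 = 0) (hexit : ∃ t ≥ 0, b ≤ |f t|) :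
    (∃ w ≥ 0, b < f w ∧ ∀ τ ∈ Icc 0 w, -b < f τ) ∨
      (∃ w ≥ 0, f w < -b ∧ ∀ τ ∈ Icc 0 w, f τ < b) := by
  obtain ⟨t₀, ht₀, hhit, hbefore⟩ :=
    exists_first_hit (fun t ht => (hf t ht).continuousWithinAt.abs) h0 hexit
  obtain ⟨a, hv, hfa⟩ := hacc t₀ ht₀ hhit
  have hb : 0 < b := hhit ▸ abs_pos.mpr (left_ne_zero_of_mul hfa.ne')
  rcases (abs_eq hb.le).mp hhit with htop | hbot
  · exact .inl (exists_exit_above_of_first_hit hb ht₀ hf hv0 hv (pos_of_mul_pos_right hfa (htop ▸ hb.le)) htop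
      hbefore)
  · obtain ⟨w, hw, hfw, hstay⟩ := exists_exit_above_of_first_hit (f := fun t => -f t) (v := fun t => -v t) hb ht₀
      (fun t ht => (hf t ht).neg) (by rw [hv0, neg_zero]) hv.neg
      (neg_pos.mpr (neg_of_mul_pos_right hfa (hbot ▸ by linarith))) (by rw [hbot, neg_neg])
      (by simpa only [abs_neg] using hbefore)
    exact .inr ⟨w, hw, by linarith, fun τ hτ => by linarith [hstay τ hτ]⟩

section Semiflow

variable {X : Type*} {F : X → ℝ → X} {W U : Set X} {p : X}

def ReachesWithin (F : X → ℝ → X) (W U : Set X) (p : X) : Prop :=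
  ∃ t ≥ 0, F p t ∈ U ∧ MapsTo (F p) (Icc 0 t) W

lemma ReachesWithin.mem (hF0 : ∀ p, F p 0 = p) (h : ReachesWithin F W U p) : p ∈ W := by
  obtain ⟨t, ht, -, hW⟩ := h
  simpa only [hF0] using hW (left_mem_Icc.mpr ht)

lemma ReachesWithin.mapsTo_Ici (hFadd : ∀ p t s, 0 ≤ t → 0 ≤ s → F p (t + s) = F (F p t) s)
    (hU : ∀ q ∈ U, ∀ t ≥ (0 : ℝ), F q t ∈ W) (h : ReachesWithin F W U p) :
    MapsTo (F p) (Ici 0) W := by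
  obtain ⟨t, ht, hpU, hpW⟩ := h
  intro τ hτ
  rcases le_or_gt τ t with hτt | hτt
  · exact hpW ⟨hτ, hτt⟩
  · rw [← add_sub_cancel t τ, hFadd p t (τ - t) ht (sub_nonneg.mpr hτt.le)]
    exact hU _ hpU _ (sub_nonneg.mpr hτt.le)

lemma ReachesWithin.not_reachesWithin {W' U' : Set X} (hUW' : Disjoint U W')
    (hU'W : Disjoint U' W) (h : ReachesWithin F W U p) : ¬ReachesWithin F W' U' p := by
  rintro ⟨t', ht', hpU', hpW'⟩
  obtain ⟨t, ht, hpU, hpW⟩ := h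
  rcases le_total t t' with htt' | ht't
  · exact hUW'.ne_of_mem hpU (hpW' ⟨ht, htt'⟩) rfl
  · exact hU'W.ne_of_mem hpU' (hpW ⟨ht', ht't⟩) rfl

def IsLyapunovStable [TopologicalSpace X] (F : X → ℝ → X) (e : X) : Prop :=
  ∀ O : Set X, IsOpen O → e ∈ O →
    ∃ V : Set X, IsOpen V ∧ e ∈ V ∧ ∀ p ∈ V, ∀ t ≥ (0 : ℝ), F p t ∈ O

lemma isOpen_setOf_reachesWithin [TopologicalSpace X]
    (hF : ContinuousOn (fun q : X × ℝ => F q.1 q.2) {q | 0 ≤ q.2}) (hW : IsOpen W)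
    (hU : IsOpen U) : IsOpen {p | ReachesWithin F W U p} := by
  refine isOpen_iff_mem_nhds.mpr fun p ⟨t, ht, hpU, hpW⟩ => ?_
  have hnear {O : Set X} (hO : IsOpen O) {τ : ℝ} (hτ : 0 ≤ τ) (hpτ : F p τ ∈ O) :
      ∀ᶠ z : X × ℝ in 𝓝 (p, τ), 0 ≤ z.2 → F z.1 z.2 ∈ O :=
    eventually_nhdsWithin_iff.mp (hF (p, τ) hτ (hO.mem_nhds hpτ))
  have hU' : ∀ᶠ x in 𝓝 p, F x t ∈ U :=
    ((Continuous.prodMk_left t).tendsto p |>.eventually (hnear hU ht hpU)).mono fun _ h => h ht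
  have hW' : ∀ᶠ x in 𝓝 p, ∀ τ ∈ Icc 0 t, 0 ≤ τ → F x τ ∈ W :=
    isCompact_Icc.eventually_forall_of_forall_eventually fun τ hτ => hnear hW hτ.1 (hpW hτ)
  filter_upwards [hU', hW'] with x hxU hxW
  exact ⟨t, ht, hxU, fun τ hτ => hxW τ hτ hτ.1⟩

lemma reachesWithin_of_tendsto [TopologicalSpace X] {V : Set X} {e : X} (hV : IsOpen V) (he : e ∈ V)
    (hW : MapsTo (F p) (Ici 0) W) (hlim : Tendsto (F p) atTop (𝓝 e)) :
    ReachesWithin F W V p := by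
  obtain ⟨T, hT⟩ := eventually_atTop.mp (hlim.eventually (hV.mem_nhds he))
  exact ⟨max T 0, le_max_right _ _, hT _ (le_max_left _ _), hW.mono_left Icc_subset_Ici_self⟩

theorem exists_mapsTo_not_tendsto_of_exit [TopologicalSpace X]
    (hF : ContinuousOn (fun q : X × ℝ => F q.1 q.2) {q | 0 ≤ q.2}) (hF0 : ∀ p, F p 0 = p)
    (hFadd : ∀ p t s, 0 ≤ t → 0 ≤ s → F p (t + s) = F (F p t) s)
    {θ : X → ℝ} (hθ : Continuous θ) {b : ℝ} {e : X} (hstab : IsLyapunovStable F e)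
    (he : θ e ∈ Ioo (-b) b) {γ : ℝ → X} (hγ : Continuous γ) (hγ_bot : θ (γ (-b)) ≤ -b)
    (hγ_top : b ≤ θ (γ b))
    (hexit : ∀ s ∈ Icc (-b) b, (∃ t ≥ 0, b ≤ |θ (F (γ s) t)|) →
      ReachesWithin F (θ ⁻¹' Ioi (-b)) (θ ⁻¹' Ioi b) (γ s) ∨
        ReachesWithin F (θ ⁻¹' Iio b) (θ ⁻¹' Iio (-b)) (γ s)) :
    ∃ p, MapsTo (F p) (Ici 0) (θ ⁻¹' Ioo (-b) b) ∧ ¬Tendsto (F p) atTop (𝓝 e) := by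
  by_contra! hconv
  obtain ⟨V, hVo, heV, hV⟩ := hstab _ (isOpen_Ioo.preimage hθ) he
  have hb : -b ≤ b := (he.1.trans he.2).le
  set Settle := {p | ReachesWithin F (θ ⁻¹' Ioo (-b) b) V p}
  set Above := {p | ReachesWithin F (θ ⁻¹' Ioi (-b)) (θ ⁻¹' Ioi b) p}
  set Below := {p | ReachesWithin F (θ ⁻¹' Iio b) (θ ⁻¹' Iio (-b)) p}
  have hcover : ∀ s ∈ Icc (-b) b, γ s ∈ Above ∪ (Settle ∪ Below) := by
    intro s hs
    by_cases hstay : MapsTo (F (γ s)) (Ici 0) (θ ⁻¹' Ioo (-b) b)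
    · exact .inr (.inl (reachesWithin_of_tendsto hVo heV hstay (hconv _ hstay)))
    · obtain ⟨t, ht, hout⟩ := not_forall₂.mp hstay
      rcases hexit s hs ⟨t, ht, le_of_not_gt fun h => hout (abs_lt.mp h)⟩ with h | h
      exacts [.inl h, .inr (.inr h)]
  have hγb : γ b ∈ Above := by
    rcases hcover b ⟨hb, le_rfl⟩ with h | h | h
    exacts [h, absurd (h.mem hF0).2 hγ_top.not_gt, absurd (h.mem hF0) hγ_top.not_gt]
  have hγb' : γ (-b) ∈ Settle ∪ Below :=
    (hcover (-b) ⟨le_rfl, hb⟩).resolve_left fun h => (h.mem hF0).not_ge hγ_bot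
  obtain ⟨s, -, habove, hsettle | hbelow⟩ := isPreconnected_Icc _ _
    ((isOpen_setOf_reachesWithin hF (isOpen_Ioi.preimage hθ) (isOpen_Ioi.preimage hθ)).preimage hγ)
    (((isOpen_setOf_reachesWithin hF (isOpen_Ioo.preimage hθ) hVo).union
      (isOpen_setOf_reachesWithin hF (isOpen_Iio.preimage hθ) (isOpen_Iio.preimage hθ))).preimage hγ)
    hcover ⟨b, ⟨hb, le_rfl⟩, hγb⟩ ⟨-b, ⟨le_rfl, hb⟩, hγb'⟩
  · obtain ⟨t, ht, hU, -⟩ := habove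
    exact (hsettle.mapsTo_Ici hFadd hV ht).2.not_gt hU
  · exact habove.not_reachesWithin (Ioi_disjoint_Iio_same.preimage θ)
      (Ioi_disjoint_Iio_same.symm.preimage θ) hbelow

end Semiflow

lemma furuta_mul_accel_pos {m l g L φ φd ψd φdd ψdd : ℝ} (hm : 0 < m) (hl : 0 < l) (hg : 0 < g)
    (hφ : |φ| = π / 2)
    (h : m * l * L * cos φ * ψdd + m * l ^ 2 * φdd - 1 / 2 * m * l ^ 2 * sin (2 * φ) * ψd * φd
      - m * g * l * sin φ = 0) :
    0 < φ * φdd := by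
  have hcos : cos φ = 0 := by
    rcases (abs_eq (by positivity)).mp hφ with rfl | rfl <;> simp
  have hφsin : 0 < φ * sin φ := by
    rcases (abs_eq (by positivity)).mp hφ with rfl | rfl <;> simp [pi_pos]
  -- at `φ = ±π/2` the coupling to the base drops out of the pendulum equation
  rw [hcos, sin_two_mul, hcos] at h
  have hl_acc : l * (φ * φdd) = g * (φ * sin φ) :=
    mul_left_cancel₀ (mul_pos hm hl).ne' (by linear_combination φ * h)
  exact pos_of_mul_pos_right (hl_acc ▸ mul_pos hg hφsin) hl.le

theorem furuta_pendulum_not_globally_attractive_general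
    (I L l m g : ℝ) (hl : 0 < l) (hm : 0 < m) (hg : 0 < g)
    (u : ℝ × ℝ × ℝ × ℝ → ℝ)
    (F : ℝ × ℝ × ℝ × ℝ → ℝ → ℝ × ℝ × ℝ × ℝ)
    (hFcont : ContinuousOn (fun q : (ℝ × ℝ × ℝ × ℝ) × ℝ => F q.1 q.2) {q | 0 ≤ q.2})
    (hF0 : ∀ p, F p 0 = p)
    (hFadd : ∀ (p : ℝ × ℝ × ℝ × ℝ) (t s : ℝ), 0 ≤ t → 0 ≤ s →
      F p (t + s) = F (F p t) s)
    (hode : ∀ (p : ℝ × ℝ × ℝ × ℝ), ∀ t ≥ (0 : ℝ),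
      HasDerivWithinAt (fun s => (F p s).1) ((F p t).2.1) (Set.Ici 0) t ∧
      HasDerivWithinAt (fun s => (F p s).2.2.1) ((F p t).2.2.2) (Set.Ici 0) t ∧
      ∃ φdd ψdd : ℝ,
        HasDerivWithinAt (fun s => (F p s).2.1) φdd (Set.Ici 0) t ∧
        HasDerivWithinAt (fun s => (F p s).2.2.2) ψdd (Set.Ici 0) t ∧
        (I + m * (L + l ^ 2 * Real.sin ((F p t).1) ^ 2)) * ψdd
          + m * l * L * Real.cos ((F p t).1) * φdd
          + (1 / 2) * m * l ^ 2 * (F p t).2.1 * Real.sin (2 * (F p t).1) * (F p t).2.2.2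
          + (-(m * l * L * Real.sin ((F p t).1))
              + (1 / 2) * m * l ^ 2 * Real.sin (2 * (F p t).1) * (F p t).2.2.2)
            * (F p t).2.1
          = u (F p t) ∧
        m * l * L * Real.cos ((F p t).1) * ψdd + m * l ^ 2 * φdd
          - (1 / 2) * m * l ^ 2 * Real.sin (2 * (F p t).1) * (F p t).2.2.2 * (F p t).2.1
          - m * g * l * Real.sin ((F p t).1) = 0)
    (ψ₀ : ℝ)
    (hstab : ∀ O : Set (ℝ × ℝ × ℝ × ℝ), IsOpen O → ((0 : ℝ), (0 : ℝ), ψ₀, (0 : ℝ)) ∈ O →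
      ∃ V : Set (ℝ × ℝ × ℝ × ℝ), IsOpen V ∧ ((0 : ℝ), (0 : ℝ), ψ₀, (0 : ℝ)) ∈ V ∧
        ∀ p ∈ V, ∀ t ≥ (0 : ℝ), F p t ∈ O) :
    ∃ p : ℝ × ℝ × ℝ × ℝ,
      (∀ t ≥ (0 : ℝ), -(Real.pi / 2) < (F p t).1 ∧ (F p t).1 < Real.pi / 2) ∧
      ¬ Filter.Tendsto (fun t => F p t) Filter.atTop
        (nhds ((0 : ℝ), (0 : ℝ), ψ₀, (0 : ℝ))) := by
  refine exists_mapsTo_not_tendsto_of_exit (θ := Prod.fst) (b := π / 2)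
    (γ := fun s => (s, 0, ψ₀, 0)) hFcont hF0 hFadd continuous_fst hstab
    ⟨by linarith [pi_pos], by linarith [pi_pos]⟩ (by fun_prop) le_rfl le_rfl fun s hs hexit => ?_
  have hacc : ∀ t ≥ 0, |(F (s, 0, ψ₀, 0) t).1| = π / 2 → ∃ a,
      HasDerivWithinAt (fun τ => (F (s, 0, ψ₀, 0) τ).2.1) a (Ici 0) t ∧
        0 < (F (s, 0, ψ₀, 0) t).1 * a := by
    intro t ht hφ
    obtain ⟨-, -, φdd, _, hφdd, -, -, hpendulum⟩ := hode _ t ht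
    exact ⟨φdd, hφdd, furuta_mul_accel_pos hm hl hg hφ hpendulum⟩
  exact exists_exit_of_mul_accel_pos (fun t ht => (hode _ t ht).1) hacc
    (by rw [hF0]; exact abs_le.mpr hs) (by rw [hF0]) hexit

/-- The Furuta pendulum (an inverted pendulum on a rotating base) with state
`(φ, φ̇, ψ, ψ̇) ∈ ℝ⁴`, governed by
`[I + m(L + l²·sin²φ)]·ψ̈ + mlL·cos φ·φ̈ + ½ml²·φ̇·sin 2φ·ψ̇ + [−mlL·sin φ + ½ml²·sin 2φ·ψ̇]·φ̇ = u`
and `mlL·cos φ·ψ̈ + ml²·φ̈ − ½ml²·sin 2φ·ψ̇·φ̇ − mgl·sin φ = 0`, whose solutions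
define a continuous semi-flow `F` on `ℝ⁴`, with a control `u` smooth in a
neighborhood of the sets `{φ = π/2}` and `{φ = −π/2}`. If `(0, 0, ψ₀, 0)` is a
Lyapunov stable equilibrium, then it is not globally attractive: some solution
satisfies `−π/2 < φ(t) < π/2` for all `t ≥ 0` and does not converge to the
equilibrium. -/
theorem furuta_pendulum_not_globally_attractive
    (I L l m g : ℝ) (hI : 0 < I) (hL : 0 < L) (hl : 0 < l) (hm : 0 < m) (hg : 0 < g)
    (u : ℝ × ℝ × ℝ × ℝ → ℝ)
    (hu : ∃ O : Set (ℝ × ℝ × ℝ × ℝ), IsOpen O ∧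
      {q : ℝ × ℝ × ℝ × ℝ | q.1 = Real.pi / 2 ∨ q.1 = -(Real.pi / 2)} ⊆ O ∧
      ContDiffOn ℝ (⊤ : ℕ∞) u O)
    (F : ℝ × ℝ × ℝ × ℝ → ℝ → ℝ × ℝ × ℝ × ℝ)
    (hFcont : ContinuousOn (fun q : (ℝ × ℝ × ℝ × ℝ) × ℝ => F q.1 q.2) {q | 0 ≤ q.2})
    (hF0 : ∀ p, F p 0 = p)
    (hFadd : ∀ (p : ℝ × ℝ × ℝ × ℝ) (t s : ℝ), 0 ≤ t → 0 ≤ s →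
      F p (t + s) = F (F p t) s)
    (hode : ∀ (p : ℝ × ℝ × ℝ × ℝ), ∀ t ≥ (0 : ℝ),
      HasDerivWithinAt (fun s => (F p s).1) ((F p t).2.1) (Set.Ici 0) t ∧
      HasDerivWithinAt (fun s => (F p s).2.2.1) ((F p t).2.2.2) (Set.Ici 0) t ∧
      ∃ φdd ψdd : ℝ,
        HasDerivWithinAt (fun s => (F p s).2.1) φdd (Set.Ici 0) t ∧
        HasDerivWithinAt (fun s => (F p s).2.2.2) ψdd (Set.Ici 0) t ∧
        (I + m * (L + l ^ 2 * Real.sin ((F p t).1) ^ 2)) * ψdd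
          + m * l * L * Real.cos ((F p t).1) * φdd
          + (1 / 2) * m * l ^ 2 * (F p t).2.1 * Real.sin (2 * (F p t).1) * (F p t).2.2.2
          + (-(m * l * L * Real.sin ((F p t).1))
              + (1 / 2) * m * l ^ 2 * Real.sin (2 * (F p t).1) * (F p t).2.2.2)
            * (F p t).2.1
          = u (F p t) ∧
        m * l * L * Real.cos ((F p t).1) * ψdd + m * l ^ 2 * φdd
          - (1 / 2) * m * l ^ 2 * Real.sin (2 * (F p t).1) * (F p t).2.2.2 * (F p t).2.1
          - m * g * l * Real.sin ((F p t).1) = 0)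
    (ψ₀ : ℝ)
    (hequil : ∀ t ≥ (0 : ℝ), F (0, 0, ψ₀, 0) t = (0, 0, ψ₀, 0))
    (hstab : ∀ O : Set (ℝ × ℝ × ℝ × ℝ), IsOpen O → ((0 : ℝ), (0 : ℝ), ψ₀, (0 : ℝ)) ∈ O →
      ∃ V : Set (ℝ × ℝ × ℝ × ℝ), IsOpen V ∧ ((0 : ℝ), (0 : ℝ), ψ₀, (0 : ℝ)) ∈ V ∧
        ∀ p ∈ V, ∀ t ≥ (0 : ℝ), F p t ∈ O) :
    ∃ p : ℝ × ℝ × ℝ × ℝ,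
      (∀ t ≥ (0 : ℝ), -(Real.pi / 2) < (F p t).1 ∧ (F p t).1 < Real.pi / 2) ∧
      ¬ Filter.Tendsto (fun t => F p t) Filter.atTop
        (nhds ((0 : ℝ), (0 : ℝ), ψ₀, (0 : ℝ))) :=
  furuta_pendulum_not_globally_attractive_general I L l m g hl hm hg u F hFcont hF0 hFadd hode ψ₀
    hstab
end

section
/- Consider the wheeled inverted pendulum equation (a₁₁a₂₂ − a₁₂²·cos φ)·φ̈ + a₁₂²·φ̇²·sin φ·cos φ − a₁₁·mgl·sin φ = (a₁₁ + a₁₂·cos φ)·u(φ, φ̇, t), where a₁₁ = (2M + m)r², a₁₂ = mrl, a₂₂ = ml² with positive constants m, M, r, l, g, and u : ℝ³ → ℝ is smooth in a neighborhood of the planes φ = π/2 and φ = −π/2. Assume the solutions define a continuous semi-process on ℝ² and that |u(φ, φ̇, t)| < mgl for all t at the points (φ, φ̇) = (π/2, 0) and (φ, φ̇) = (−π/2, 0). If the vertical upward position (φ, φ̇) = (0, 0) is a uniformly Lyapunov stable equilibrium, then it is not globally attractive: there exists a solution with −π/2 < φ(t) < π/2 for all t ≥ 0 that does not converge to (0,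 0). -/
/-!
A Ważewski-type connectedness argument. Let `A` be the set of initial states whose angle stays in
the open strip `|φ| < π/2` forever and `B` the set of those whose angle leaves the closed strip
at some time. `B` is open by continuity of the semi-process. If every solution staying in the strip
converged to the origin, `A` would be open as well: such a solution enters the neighbourhood of
the origin given by uniform stability after a finite time, and continuity on the compact time
interval before that does the rest. A solution that never leaves the closed strip can touch its
boundary only at a maximum of `±φ`, hence at rest if it starts at rest; but at rest on `φ = ±π/2`
the bound `|u| < mgl` makes `φ̈` point outwards. So the segment `[-π/2, π/2] × {0}` of states at
rest is covered by the disjoint open sets `A ∋ (0, 0)` and `B ∋ (π/2, 0)`, contradicting its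
connectedness.
-/

open Set Filter Topology Function Real

section StrictEgress

variable {f g : ℝ → ℝ} {τ c : ℝ}

lemma eventually_lt_of_hasDerivWithinAt_Ici_pos (hg : HasDerivWithinAt g c (Ici τ) τ)
    (hc : 0 < c) : ∀ᶠ s in 𝓝[>] τ, g τ < g s := by
  have hslope : Tendsto (slope g τ) (𝓝[>] τ) (𝓝 c) :=
    (hasDerivWithinAt_iff_tendsto_slope' (lt_irrefl τ)).1 hg.Ioi_of_Ici
  filter_upwards [hslope.eventually (eventually_gt_nhds hc), self_mem_nhdsWithin] with s hs hτs
  exact (slope_pos_iff hτs).1 hs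

lemma exists_gt_of_deriv_eq_zero_of_deriv_deriv_pos
    (hf : ∀ t ≥ τ, HasDerivWithinAt f (g t) (Ici τ) t) (hgτ : g τ = 0)
    (hg : HasDerivWithinAt g c (Ici τ) τ) (hc : 0 < c) : ∃ s > τ, f τ < f s := by
  obtain ⟨b, hτb, hgpos⟩ :=
    mem_nhdsGT_iff_exists_Ioo_subset.1 (eventually_lt_of_hasDerivWithinAt_Ici_pos hg hc)
  have hmono : StrictMonoOn f (Icc τ b) := by
    refine strictMonoOn_of_hasDerivWithinAt_pos (f' := g) (convex_Icc τ b)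
      (fun t ht => (hf t ht.1).continuousWithinAt.mono Icc_subset_Ici_self) (fun t ht => ?_)
      (fun t ht => ?_) <;> simp only [interior_Icc] at ht ⊢
    · exact (hf t ht.1.le).mono (Ioo_subset_Icc_self.trans Icc_subset_Ici_self)
    · exact hgτ ▸ hgpos ht
  exact ⟨b, hτb, hmono (left_mem_Icc.2 hτb.le) (right_mem_Icc.2 hτb.le) hτb⟩

lemma forall_lt_of_forall_le_of_deriv_deriv_pos {b : ℝ}
    (hf : ∀ t ≥ 0, HasDerivWithinAt f (g t) (Ici 0) t) (hg0 : g 0 = 0)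
    (hle : ∀ t ≥ 0, f t ≤ b)
    (hacc : ∀ t ≥ 0, f t = b → g t = 0 → ∃ c > 0, HasDerivWithinAt g c (Ici 0) t) :
    ∀ t ≥ 0, f t < b := by
  intro t ht
  refine (hle t ht).lt_of_ne fun hfb => ?_
  have hmax : IsMaxOn f (Ici 0) t := isMaxOn_iff.2 fun s hs => hfb ▸ hle s hs
  have hgt : g t = 0 := by
    rcases ht.eq_or_lt with rfl | ht'
    · exact hg0
    · exact (hmax.isLocalMax (Ici_mem_nhds ht')).hasDerivAt_eq_zero
        ((hf t ht).hasDerivAt (Ici_mem_nhds ht'))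
  obtain ⟨c, hc, hgc⟩ := hacc t ht hfb hgt
  obtain ⟨s, hts, hfs⟩ := exists_gt_of_deriv_eq_zero_of_deriv_deriv_pos
    (fun s hs => (hf s (ht.trans hs)).mono (Ici_subset_Ici.2 ht)) hgt
    (hgc.mono (Ici_subset_Ici.2 ht)) hc
  exact (isMaxOn_iff.1 hmax s (ht.trans hts.le)).not_gt hfs

end StrictEgress

section SemiProcess

variable {X Y : Type*} [TopologicalSpace X] [TopologicalSpace Y]

lemma continuous_apply_of_continuousOn {F : X → ℝ → Y}
    (hF : ContinuousOn (uncurry F) {q | 0 ≤ q.2}) {t : ℝ} (ht : 0 ≤ t) : Continuous (F · t) :=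
  hF.comp_continuous (continuous_id.prodMk continuous_const) fun _ => ht

lemma isOpen_setOf_exists_mem {F : X → ℝ → Y} (hF : ContinuousOn (uncurry F) {q | 0 ≤ q.2})
    {E : Set Y} (hE : IsOpen E) : IsOpen {p | ∃ t ≥ 0, F p t ∈ E} := by
  have hunion : {p | ∃ t ≥ 0, F p t ∈ E} = ⋃ t ∈ Ici (0 : ℝ), (F · t) ⁻¹' E := by
    ext p; simp
  rw [hunion]
  exact isOpen_biUnion fun t ht => hE.preimage (continuous_apply_of_continuousOn hF ht)

lemma isOpen_setOf_forall_mem {F : X → ℝ → Y} (hF : ContinuousOn (uncurry F) {q | 0 ≤ q.2})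
    {S : Set Y} (hS : IsOpen S)
    (htail : ∀ p, (∀ t ≥ 0, F p t ∈ S) → ∃ T, ∀ᶠ q in 𝓝 p, ∀ t ≥ T, F q t ∈ S) :
    IsOpen {p | ∀ t ≥ 0, F p t ∈ S} := by
  refine isOpen_iff_mem_nhds.2 fun p hp => ?_
  obtain ⟨T, hT⟩ := htail p hp
  have hhead : ∀ᶠ q in 𝓝 p, ∀ t ∈ Icc 0 T, 0 ≤ t → F q t ∈ S :=
    isCompact_Icc.eventually_forall_of_forall_eventually fun t ht =>
      eventually_nhdsWithin_iff.1 ((hF (p, t) ht.1).eventually (hS.mem_nhds (hp t ht.1)))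
  filter_upwards [hhead, hT] with q hqhead hqtail t ht
  rcases le_or_gt t T with htT | hTt
  · exact hqhead t ⟨ht, htT⟩ ht
  · exact hqtail t hTt.le

lemma isOpen_setOf_forall_mem_of_uniformlyStable {Φ : X → ℝ → ℝ → X}
    (hΦ : ContinuousOn (fun q : X × ℝ => Φ q.1 0 q.2) {q | 0 ≤ q.2})
    (hadd : ∀ p t₀ t s, 0 ≤ t → 0 ≤ s → Φ p t₀ (t + s) = Φ (Φ p t₀ t) (t₀ + t) s)
    {S V : Set X} (hS : IsOpen S) (hV : IsOpen V)
    (hVS : ∀ p ∈ V, ∀ t₀ ≥ 0, ∀ t ≥ 0, Φ p t₀ t ∈ S)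
    (hattr : ∀ p, (∀ t ≥ 0, Φ p 0 t ∈ S) → ∃ T ≥ 0, Φ p 0 T ∈ V) :
    IsOpen {p | ∀ t ≥ 0, Φ p 0 t ∈ S} := by
  refine isOpen_setOf_forall_mem (F := fun p t => Φ p 0 t) hΦ hS fun p hp => ?_
  obtain ⟨T, hT, hpT⟩ := hattr p hp
  refine ⟨T, ?_⟩
  filter_upwards [(continuous_apply_of_continuousOn (F := fun p t => Φ p 0 t) hΦ hT).continuousAt
    (hV.mem_nhds hpT)] with q hq t ht
  have hsplit := hadd q 0 T (t - T) hT (sub_nonneg.2 ht)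
  rw [zero_add, add_sub_cancel] at hsplit
  rw [hsplit]
  exact hVS _ hq T hT _ (sub_nonneg.2 ht)

end SemiProcess

section Pendulum

/-- The equation of motion, with `k = mgl` and `w` the value of the control. -/
def WheeledPendulumEq (a₁₁ a₁₂ a₂₂ k φ ω φdd w : ℝ) : Prop :=
  (a₁₁ * a₂₂ - a₁₂ ^ 2 * cos φ) * φdd + a₁₂ ^ 2 * ω ^ 2 * sin φ * cos φ - a₁₁ * k * sin φ
    = (a₁₁ + a₁₂ * cos φ) * w

variable {a₁₁ a₁₂ a₂₂ k φdd w : ℝ}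

lemma WheeledPendulumEq.pos_of_pi_div_two (h : WheeledPendulumEq a₁₁ a₁₂ a₂₂ k (π / 2) 0 φdd w)
    (h₁₁ : 0 < a₁₁) (h₂₂ : 0 < a₂₂) (hw : |w| < k) : 0 < φdd := by
  simp only [WheeledPendulumEq, cos_pi_div_two, sin_pi_div_two] at h
  have hwk := (abs_lt.1 hw).1
  nlinarith [mul_pos h₁₁ h₂₂]

lemma WheeledPendulumEq.neg_of_neg_pi_div_two
    (h : WheeledPendulumEq a₁₁ a₁₂ a₂₂ k (-(π / 2)) 0 φdd w)
    (h₁₁ : 0 < a₁₁) (h₂₂ : 0 < a₂₂) (hw : |w| < k) : φdd < 0 := by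
  simp only [WheeledPendulumEq, cos_neg, sin_neg, cos_pi_div_two, sin_pi_div_two] at h
  have hwk := (abs_lt.1 hw).2
  nlinarith [mul_pos h₁₁ h₂₂]

lemma wheeledPendulum_angle_mem_Ioo {t₀ : ℝ} {u : ℝ × ℝ × ℝ → ℝ} {φ ω : ℝ → ℝ}
    (h₁₁ : 0 < a₁₁) (h₂₂ : 0 < a₂₂)
    (hu : ∀ t, |u (π / 2, 0, t)| < k ∧ |u (-(π / 2), 0, t)| < k)
    (hφ : ∀ t ≥ 0, HasDerivWithinAt φ (ω t) (Ici 0) t)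
    (hω : ∀ t ≥ 0, ∃ φdd, HasDerivWithinAt ω φdd (Ici 0) t ∧
      WheeledPendulumEq a₁₁ a₁₂ a₂₂ k (φ t) (ω t) φdd (u (φ t, ω t, t₀ + t)))
    (hω0 : ω 0 = 0) (hφIcc : ∀ t ≥ 0, φ t ∈ Icc (-(π / 2)) (π / 2)) :
    ∀ t ≥ 0, φ t ∈ Ioo (-(π / 2)) (π / 2) := by
  have hupper := forall_lt_of_forall_le_of_deriv_deriv_pos hφ hω0 (fun t ht => (hφIcc t ht).2)
    fun t ht hφt hωt => by
      obtain ⟨φdd, hd, heq⟩ := hω t ht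
      rw [hφt, hωt] at heq
      exact ⟨φdd, heq.pos_of_pi_div_two h₁₁ h₂₂ (hu _).1, hd⟩
  have hlower := forall_lt_of_forall_le_of_deriv_deriv_pos (f := -φ) (g := -ω)
    (fun t ht => (hφ t ht).neg) (by simp [hω0]) (fun t ht => neg_le.2 (hφIcc t ht).1)
    fun t ht hφt hωt => by
      obtain ⟨φdd, hd, heq⟩ := hω t ht
      rw [Pi.neg_apply, neg_eq_iff_eq_neg] at hφt hωt
      rw [hφt, hωt, neg_zero] at heq
      exact ⟨-φdd, neg_pos.2 (heq.neg_of_neg_pi_div_two h₁₁ h₂₂ (hu _).2), hd.neg⟩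
  exact fun t ht => ⟨neg_lt.1 (hlower t ht), hupper t ht⟩

end Pendulum

theorem wheeled_pendulum_not_globally_attractive_general
    (m M r l g : ℝ) (hm : 0 < m) (hM : 0 < M) (hr : 0 < r) (hl : 0 < l)
    (a₁₁ a₁₂ a₂₂ : ℝ)
    (ha₁₁ : a₁₁ = (2 * M + m) * r ^ 2) (ha₂₂ : a₂₂ = m * l ^ 2)
    (u : ℝ × ℝ × ℝ → ℝ)
    (hubound : ∀ t : ℝ, |u (Real.pi / 2, 0, t)| < m * g * l ∧
      |u (-(Real.pi / 2), 0, t)| < m * g * l)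
    (Φ : ℝ × ℝ → ℝ → ℝ → ℝ × ℝ)
    (hΦcont : ContinuousOn (fun q : (ℝ × ℝ) × ℝ × ℝ => Φ q.1 q.2.1 q.2.2) {q | 0 ≤ q.2.2})
    (hΦ0 : ∀ p t₀, Φ p t₀ 0 = p)
    (hΦadd : ∀ (p : ℝ × ℝ) (t₀ t s : ℝ), 0 ≤ t → 0 ≤ s →
      Φ p t₀ (t + s) = Φ (Φ p t₀ t) (t₀ + t) s)
    (hode : ∀ (p : ℝ × ℝ) (t₀ : ℝ), ∀ t ≥ (0 : ℝ),
      HasDerivWithinAt (fun s => (Φ p t₀ s).1) ((Φ p t₀ t).2) (Set.Ici 0) t ∧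
      ∃ φdd : ℝ,
        HasDerivWithinAt (fun s => (Φ p t₀ s).2) φdd (Set.Ici 0) t ∧
        (a₁₁ * a₂₂ - a₁₂ ^ 2 * Real.cos ((Φ p t₀ t).1)) * φdd
          + a₁₂ ^ 2 * ((Φ p t₀ t).2) ^ 2 * Real.sin ((Φ p t₀ t).1) * Real.cos ((Φ p t₀ t).1)
          - a₁₁ * (m * g * l) * Real.sin ((Φ p t₀ t).1)
          = (a₁₁ + a₁₂ * Real.cos ((Φ p t₀ t).1)) * u ((Φ p t₀ t).1, (Φ p t₀ t).2, t₀ + t))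
    (hstab : ∀ O : Set (ℝ × ℝ), IsOpen O → ((0 : ℝ), (0 : ℝ)) ∈ O →
      ∃ V : Set (ℝ × ℝ), IsOpen V ∧ ((0 : ℝ), (0 : ℝ)) ∈ V ∧
        ∀ p ∈ V, ∀ t₀ ≥ (0 : ℝ), ∀ t ≥ (0 : ℝ), Φ p t₀ t ∈ O) :
    ∃ p : ℝ × ℝ, (∀ t ≥ (0 : ℝ), -(Real.pi / 2) < (Φ p 0 t).1 ∧ (Φ p 0 t).1 < Real.pi / 2) ∧
      ¬ Filter.Tendsto (fun t => Φ p 0 t) Filter.atTop (nhds ((0 : ℝ), (0 : ℝ))) := by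
  by_contra! hattr
  have h₁₁ : 0 < a₁₁ := ha₁₁ ▸ by positivity
  have h₂₂ : 0 < a₂₂ := ha₂₂ ▸ by positivity
  have hF : ContinuousOn (fun q : (ℝ × ℝ) × ℝ => Φ q.1 0 q.2) {q | 0 ≤ q.2} :=
    hΦcont.comp (f := fun q : (ℝ × ℝ) × ℝ => (q.1, (0 : ℝ), q.2)) (by fun_prop) fun _ h => h
  set S : Set (ℝ × ℝ) := Prod.fst ⁻¹' Ioo (-(π / 2)) (π / 2)
  set A := {p | ∀ t ≥ 0, Φ p 0 t ∈ S}
  set B := {p | ∃ t ≥ 0, Φ p 0 t ∈ Prod.fst ⁻¹' (Icc (-(π / 2)) (π / 2))ᶜ}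
  have hS : IsOpen S := isOpen_Ioo.preimage continuous_fst
  obtain ⟨V, hV, hV0, hVS⟩ := hstab S hS ⟨neg_lt_zero.2 pi_div_two_pos, pi_div_two_pos⟩
  have hA : IsOpen A := isOpen_setOf_forall_mem_of_uniformlyStable hF hΦadd hS hV hVS
    fun p hp => ((eventually_ge_atTop 0).and ((hattr p hp).eventually (hV.mem_nhds hV0))).exists
  have hB : IsOpen B := isOpen_setOf_exists_mem (F := fun p t => Φ p 0 t) hF
    (isClosed_Icc.isOpen_compl.preimage continuous_fst)
  have hcover : Icc (-(π / 2)) (π / 2) ×ˢ {0} ⊆ A ∪ B := by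
    rintro ⟨x, _⟩ ⟨-, rfl⟩
    refine or_iff_not_imp_right.2 fun hB => ?_
    exact wheeledPendulum_angle_mem_Ioo h₁₁ h₂₂ hubound (fun t ht => (hode _ 0 t ht).1)
      (fun t ht => (hode _ 0 t ht).2) (by rw [hΦ0]) fun t ht => not_not.1 fun h => hB ⟨t, ht, h⟩
  have hπ : (π / 2, (0 : ℝ)) ∈ Icc (-(π / 2)) (π / 2) ×ˢ {0} :=
    ⟨⟨neg_le_self pi_div_two_pos.le, le_rfl⟩, rfl⟩
  have hπA : (π / 2, (0 : ℝ)) ∉ A := fun h => (h 0 le_rfl).2.ne (by rw [hΦ0])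
  obtain ⟨q, -, hqA, t, ht, hqt⟩ := (isPreconnected_Icc.prod isPreconnected_singleton) A B hA hB
    hcover ⟨0, ⟨⟨neg_nonpos.2 pi_div_two_pos.le, pi_div_two_pos.le⟩, rfl⟩, fun t ht => hVS _ hV0 0 le_rfl t ht⟩
    ⟨_, hπ, (hcover hπ).resolve_left hπA⟩
  exact hqt (Ioo_subset_Icc_self (hqA t ht))

/-- The wheeled inverted pendulum
`(a₁₁a₂₂ − a₁₂²·cos φ)·φ̈ + a₁₂²·φ̇²·sin φ·cos φ − a₁₁·mgl·sin φ = (a₁₁ + a₁₂·cos φ)·u(φ, φ̇, t)`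
with `a₁₁ = (2M + m)r²`, `a₁₂ = mrl`, `a₂₂ = ml²`, whose solutions define a
continuous semi-process `Φ` on `ℝ²` in the coordinates `(φ, φ̇)`, the control `u`
being smooth near the planes `φ = ±π/2` and satisfying `|u| < mgl` at
`(φ, φ̇) = (±π/2, 0)` for all `t`. If the upward position `(0, 0)` is a uniformly
Lyapunov stable equilibrium, then it is not globally attractive: some solution
satisfies `−π/2 < φ(t) < π/2` for all `t ≥ 0` and does not converge to `(0, 0)`. -/
theorem wheeled_pendulum_not_globally_attractive
    (m M r l g : ℝ) (hm : 0 < m) (hM : 0 < M) (hr : 0 < r) (hl : 0 < l) (hg : 0 < g)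
    (a₁₁ a₁₂ a₂₂ : ℝ)
    (ha₁₁ : a₁₁ = (2 * M + m) * r ^ 2) (ha₁₂ : a₁₂ = m * r * l) (ha₂₂ : a₂₂ = m * l ^ 2)
    (u : ℝ × ℝ × ℝ → ℝ)
    (hu : ∃ O : Set (ℝ × ℝ × ℝ), IsOpen O ∧
      {q : ℝ × ℝ × ℝ | q.1 = Real.pi / 2 ∨ q.1 = -(Real.pi / 2)} ⊆ O ∧
      ContDiffOn ℝ (⊤ : ℕ∞) u O)
    (hubound : ∀ t : ℝ, |u (Real.pi / 2, 0, t)| < m * g * l ∧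
      |u (-(Real.pi / 2), 0, t)| < m * g * l)
    (Φ : ℝ × ℝ → ℝ → ℝ → ℝ × ℝ)
    (hΦcont : ContinuousOn (fun q : (ℝ × ℝ) × ℝ × ℝ => Φ q.1 q.2.1 q.2.2) {q | 0 ≤ q.2.2})
    (hΦ0 : ∀ p t₀, Φ p t₀ 0 = p)
    (hΦadd : ∀ (p : ℝ × ℝ) (t₀ t s : ℝ), 0 ≤ t → 0 ≤ s →
      Φ p t₀ (t + s) = Φ (Φ p t₀ t) (t₀ + t) s)
    (hode : ∀ (p : ℝ × ℝ) (t₀ : ℝ), ∀ t ≥ (0 : ℝ),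
      HasDerivWithinAt (fun s => (Φ p t₀ s).1) ((Φ p t₀ t).2) (Set.Ici 0) t ∧
      ∃ φdd : ℝ,
        HasDerivWithinAt (fun s => (Φ p t₀ s).2) φdd (Set.Ici 0) t ∧
        (a₁₁ * a₂₂ - a₁₂ ^ 2 * Real.cos ((Φ p t₀ t).1)) * φdd
          + a₁₂ ^ 2 * ((Φ p t₀ t).2) ^ 2 * Real.sin ((Φ p t₀ t).1) * Real.cos ((Φ p t₀ t).1)
          - a₁₁ * (m * g * l) * Real.sin ((Φ p t₀ t).1)
          = (a₁₁ + a₁₂ * Real.cos ((Φ p t₀ t).1)) * u ((Φ p t₀ t).1, (Φ p t₀ t).2, t₀ + t))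
    (hequil : ∀ t₀ ≥ (0 : ℝ), ∀ t ≥ (0 : ℝ), Φ (0, 0) t₀ t = (0, 0))
    (hstab : ∀ O : Set (ℝ × ℝ), IsOpen O → ((0 : ℝ), (0 : ℝ)) ∈ O →
      ∃ V : Set (ℝ × ℝ), IsOpen V ∧ ((0 : ℝ), (0 : ℝ)) ∈ V ∧
        ∀ p ∈ V, ∀ t₀ ≥ (0 : ℝ), ∀ t ≥ (0 : ℝ), Φ p t₀ t ∈ O) :
    ∃ p : ℝ × ℝ, (∀ t ≥ (0 : ℝ), -(Real.pi / 2) < (Φ p 0 t).1 ∧ (Φ p 0 t).1 < Real.pi / 2) ∧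
      ¬ Filter.Tendsto (fun t => Φ p 0 t) Filter.atTop (nhds ((0 : ℝ), (0 : ℝ))) :=
  wheeled_pendulum_not_globally_attractive_general m M r l g hm hM hr hl a₁₁ a₁₂ a₂₂ ha₁₁ ha₂₂ u
    hubound Φ hΦcont hΦ0 hΦadd hode hstab
end

section
/- Let M be a topological space, Φ a continuous semi-process on M, and W ⊂ M × ℝ an open set with W⁻ = W⁻⁻. Let x₀ be a uniformly Lyapunov stable equilibrium of Φ, U open with x₀ ∈ U and closure(U) × ℝ ⊂ W, and Γ : [0,1] → M × ℝ a continuous path with Γ(s) ∈ W₀ for s ∈ (0,1), Γ(0) = (x₀,0), Γ(1) ∈ W₀⁻⁻. Suppose, for contradiction, that every point (x,0) on Γ with σ(x) = ∞ satisfies Φ_{0,t}(x) → x₀ as t → ∞. Then the map Ω from Γ to {Γ(0), Γ(1)} defined by Ω(x,0) = Γ(0) if σ(x) = ∞ and Ω(x,0) = Γ(1) if σ(x) < ∞ is a continuous surjection from the connected set Γ([0,1]) onto the two-point set {Γ(0), Γ(1)} — which is impossible; hence there exists a point (x,0) on Γ with σ(x) = ∞ and Φ_{0,t}(x) not converging to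 x₀. -/
/-
A point of `Γ` whose trajectory never leaves `W` and converges to the stable equilibrium `x₀`
eventually enters a neighbourhood `V` of `x₀` from which no trajectory leaves `W`; by compactness of
the time interval before that, the same holds for nearby points. A point whose trajectory does leave
`W` leaves `W`'s closure (at an interior point of `Γ` because `W⁻ = W⁻⁻`, at `Γ(1)` by assumption),
and then so do all nearby trajectories. Hence `σ = ∞` is locally constant along the connected curve
`Γ`, although it holds at `Γ(0)` and fails at `Γ(1)`.
-/

open scoped ENNReal

/-- The egress time of `x` (with initial time `0`) from `W ⊆ M × ℝ` for the
semi-process `Φ` (written `Φ x t₀ t` for `Φ_{t₀,t}(x)`):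
`σ(x) = sup {τ ≥ 0 : (Φ_{0,t}(x), t) ∈ W for all t ∈ [0, τ)}`, valued in `ℝ≥0∞`.
For `(x, 0) ∈ ∂W` this supremum equals `0`. -/
noncomputable def spEgressTime {M : Type*}
    (Φ : M → ℝ → ℝ → M) (W : Set (M × ℝ)) (x : M) : ℝ≥0∞ :=
  sSup {τ : ℝ≥0∞ | ∀ t : ℝ, 0 ≤ t → ENNReal.ofReal t < τ → (Φ x 0 t, t) ∈ W}

/-- Egress points of `W ⊆ M × ℝ` for the semi-process `Φ`: boundary points
`(x₁, t₁)` such that either `t₁ > 0` and `(x₁, t₁) = (Φ_{0,σ(x)}(x), σ(x))` for some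
`(x, 0) ∈ W`, or `t₁ = 0` and the forward trajectory of `x₁` leaves `W ∪ ∂W`
immediately. -/
def spEgress {M : Type*} [TopologicalSpace M]
    (Φ : M → ℝ → ℝ → M) (W : Set (M × ℝ)) : Set (M × ℝ) :=
  {p ∈ frontier W |
    (0 < p.2 ∧ ∃ x : M, (x, (0 : ℝ)) ∈ W ∧ spEgressTime Φ W x ≠ ⊤ ∧
      p.2 = (spEgressTime Φ W x).toReal ∧ p.1 = Φ x 0 (spEgressTime Φ W x).toReal) ∨
    (p.2 = 0 ∧ ∃ ε > (0 : ℝ), ∀ t ∈ Set.Ioo (0 : ℝ) ε, (Φ p.1 0 t, t) ∉ W ∪ frontier W)}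

/-- Strict egress points of `W ⊆ M × ℝ` for the semi-process `Φ`: egress points
whose continued trajectory stays outside `W ∪ ∂W` for a positive time interval
(by the semigroup property, `(Φ_{0,σ(x)+t}(x), σ(x)+t) = (Φ_{t₁,t}(x₁), t₁ + t)`). -/
def spStrictEgress {M : Type*} [TopologicalSpace M]
    (Φ : M → ℝ → ℝ → M) (W : Set (M × ℝ)) : Set (M × ℝ) :=
  {p ∈ spEgress Φ W |
    ∃ ε > (0 : ℝ), ∀ t ∈ Set.Ioo (0 : ℝ) ε, (Φ p.1 p.2 t, p.2 + t) ∉ W ∪ frontier W}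

/-- The section `S_τ = {(x, t) ∈ S : t = τ}` of a subset of the extended phase space. -/
def timeSection {M : Type*} (S : Set (M × ℝ)) (τ : ℝ) : Set (M × ℝ) :=
  {p ∈ S | p.2 = τ}

open Set Filter Topology

lemma IsPreconnected.iff_of_eventually_iff {X : Type*} [TopologicalSpace X] {S : Set X}
    (hS : IsPreconnected S) {P : X → Prop} (hP : ∀ x ∈ S, ∀ᶠ y in 𝓝[S] x, (P y ↔ P x))
    {a b : X} (ha : a ∈ S) (hb : b ∈ S) : P a ↔ P b := by
  classical
  have hcont : ContinuousOn (fun x => decide (P x)) S := fun x hx => by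
    rw [ContinuousWithinAt, nhds_discrete, tendsto_pure]
    exact (hP x hx).mono fun y hy => by simp [hy]
  simpa using hS.constant hcont ha hb

section EgressTime

variable {M : Type*} {Φ : M → ℝ → ℝ → M} {W : Set (M × ℝ)} {x : M}

lemma mem_of_ofReal_lt_spEgressTime {t : ℝ} (ht : 0 ≤ t)
    (h : ENNReal.ofReal t < spEgressTime Φ W x) : (Φ x 0 t, t) ∈ W := by
  obtain ⟨τ, hτ, htτ⟩ := lt_sSup_iff.mp h
  exact hτ t ht htτ

lemma ofReal_le_spEgressTime {T : ℝ} (h : ∀ t, 0 ≤ t → t < T → (Φ x 0 t, t) ∈ W) :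
    ENNReal.ofReal T ≤ spEgressTime Φ W x :=
  le_sSup fun t ht hlt => h t ht ((ENNReal.ofReal_lt_ofReal_iff_of_nonneg ht).mp hlt)

lemma spEgressTime_ne_top_of_notMem {T : ℝ} (hT : 0 ≤ T) (h : (Φ x 0 T, T) ∉ W) :
    spEgressTime Φ W x ≠ ⊤ :=
  ne_top_of_le_ne_top ENNReal.ofReal_ne_top <|
    sSup_le fun _ hτ => le_of_not_gt fun hlt => h (hτ T hT hlt)

lemma spEgressTime_eq_top_iff :
    spEgressTime Φ W x = ⊤ ↔ ∀ t, 0 ≤ t → (Φ x 0 t, t) ∈ W :=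
  ⟨fun h _ ht => mem_of_ofReal_lt_spEgressTime ht (h ▸ ENNReal.ofReal_lt_top),
    fun h => top_unique (le_sSup fun t ht _ => h t ht)⟩

variable [TopologicalSpace M]

lemma continuousOn_uncurry_trajectory
    (hΦcont : ContinuousOn (fun q : M × ℝ × ℝ => Φ q.1 q.2.1 q.2.2) {q | 0 ≤ q.2.2}) :
    ContinuousOn (fun q : M × ℝ => (Φ q.1 0 q.2, q.2)) {q | 0 ≤ q.2} :=
  (hΦcont.comp (Continuous.continuousOn (f := fun q : M × ℝ => (q.1, (0 : ℝ), q.2)) (by fun_prop))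
    fun _ hq => hq).prodMk continuous_snd.continuousOn

lemma continuousOn_trajectory_time
    (hΦcont : ContinuousOn (fun q : M × ℝ × ℝ => Φ q.1 q.2.1 q.2.2) {q | 0 ≤ q.2.2}) (x : M) :
    ContinuousOn (fun t => (Φ x 0 t, t)) (Ici 0) :=
  (continuousOn_uncurry_trajectory hΦcont).comp
    (Continuous.continuousOn (f := fun t : ℝ => (x, t)) (by fun_prop)) fun _ ht => ht

lemma ofReal_lt_spEgressTime
    (hΦcont : ContinuousOn (fun q : M × ℝ × ℝ => Φ q.1 q.2.1 q.2.2) {q | 0 ≤ q.2.2})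
    (hW : IsOpen W) {T : ℝ} (hT : 0 ≤ T) (h : ∀ t ∈ Icc 0 T, (Φ x 0 t, t) ∈ W) :
    ENNReal.ofReal T < spEgressTime Φ W x := by
  obtain ⟨δ, hδ, hball⟩ := Metric.mem_nhdsWithin_iff.mp <|
    continuousOn_trajectory_time hΦcont x T hT (hW.mem_nhds (h T ⟨hT, le_rfl⟩))
  calc ENNReal.ofReal T < ENNReal.ofReal (T + δ) :=
        (ENNReal.ofReal_lt_ofReal_iff (by linarith)).mpr (by linarith)
    _ ≤ spEgressTime Φ W x := ofReal_le_spEgressTime fun t ht htδ => by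
        rcases le_or_gt t T with htT | hTt
        · exact h t ⟨ht, htT⟩
        · refine hball ⟨?_, ht⟩
          rw [Metric.mem_ball, Real.dist_eq, abs_lt]
          constructor <;> linarith

lemma spEgressTime_pos
    (hΦcont : ContinuousOn (fun q : M × ℝ × ℝ => Φ q.1 q.2.1 q.2.2) {q | 0 ≤ q.2.2})
    (hΦ0 : ∀ x t₀, Φ x t₀ 0 = x) (hW : IsOpen W) (hx : (x, (0 : ℝ)) ∈ W) :
    0 < spEgressTime Φ W x := by
  simpa using ofReal_lt_spEgressTime hΦcont hW le_rfl fun t ht => by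
    obtain rfl : t = 0 := le_antisymm ht.2 ht.1
    rwa [hΦ0]

lemma trajectory_spEgressTime_notMem
    (hΦcont : ContinuousOn (fun q : M × ℝ × ℝ => Φ q.1 q.2.1 q.2.2) {q | 0 ≤ q.2.2})
    (hW : IsOpen W) (hσ : spEgressTime Φ W x ≠ ⊤) :
    (Φ x 0 (spEgressTime Φ W x).toReal, (spEgressTime Φ W x).toReal) ∉ W := fun hmem => by
  have hT := ofReal_lt_spEgressTime hΦcont hW ENNReal.toReal_nonneg fun t ht => by
    rcases ht.2.lt_or_eq with htT | rfl
    · exact mem_of_ofReal_lt_spEgressTime ht.1 <|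
        (ENNReal.ofReal_lt_iff_lt_toReal ht.1 hσ).mpr htT
    · exact hmem
  rw [ENNReal.ofReal_toReal hσ] at hT
  exact hT.false

lemma trajectory_spEgressTime_mem_closure
    (hΦcont : ContinuousOn (fun q : M × ℝ × ℝ => Φ q.1 q.2.1 q.2.2) {q | 0 ≤ q.2.2})
    (hσ : spEgressTime Φ W x ≠ ⊤) (hpos : 0 < (spEgressTime Φ W x).toReal) :
    (Φ x 0 (spEgressTime Φ W x).toReal, (spEgressTime Φ W x).toReal) ∈ closure W := by
  set T := (spEgressTime Φ W x).toReal
  have hcont : ContinuousWithinAt (fun t => (Φ x 0 t, t)) (Ico 0 T) T :=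
    (continuousOn_trajectory_time hΦcont x T hpos.le).mono Ico_subset_Ici_self
  refine closure_mono ?_ (hcont.mem_closure_image (by simp [closure_Ico hpos.ne, hpos.le]))
  rintro _ ⟨t, ht, rfl⟩
  exact mem_of_ofReal_lt_spEgressTime ht.1 ((ENNReal.ofReal_lt_iff_lt_toReal ht.1 hσ).mpr ht.2)

lemma trajectory_spEgressTime_mem_spEgress
    (hΦcont : ContinuousOn (fun q : M × ℝ × ℝ => Φ q.1 q.2.1 q.2.2) {q | 0 ≤ q.2.2})
    (hΦ0 : ∀ x t₀, Φ x t₀ 0 = x) (hW : IsOpen W) (hx : (x, (0 : ℝ)) ∈ W)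
    (hσ : spEgressTime Φ W x ≠ ⊤) :
    (Φ x 0 (spEgressTime Φ W x).toReal, (spEgressTime Φ W x).toReal) ∈ spEgress Φ W := by
  have hpos := ENNReal.toReal_pos (spEgressTime_pos hΦcont hΦ0 hW hx).ne' hσ
  refine ⟨?_, Or.inl ⟨hpos, x, hx, hσ, rfl, rfl⟩⟩
  rw [hW.frontier_eq]
  exact ⟨trajectory_spEgressTime_mem_closure hΦcont hσ hpos,
    trajectory_spEgressTime_notMem hΦcont hW hσ⟩

lemma exists_trajectory_notMem_closure_of_mem_spStrictEgress {p : M × ℝ}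
    (hp : p ∈ spStrictEgress Φ W) : ∃ t > 0, (Φ p.1 p.2 t, p.2 + t) ∉ closure W := by
  obtain ⟨-, ε, hε, hout⟩ := hp
  refine ⟨ε / 2, half_pos hε, ?_⟩
  rw [closure_eq_self_union_frontier]
  exact hout _ ⟨half_pos hε, half_lt_self hε⟩

lemma exists_trajectory_notMem_closure_of_spEgressTime_ne_top
    (hΦcont : ContinuousOn (fun q : M × ℝ × ℝ => Φ q.1 q.2.1 q.2.2) {q | 0 ≤ q.2.2})
    (hΦ0 : ∀ x t₀, Φ x t₀ 0 = x)
    (hΦadd : ∀ (x : M) (t₀ t s : ℝ), 0 ≤ t → 0 ≤ s →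
      Φ x t₀ (t + s) = Φ (Φ x t₀ t) (t₀ + t) s)
    (hW : IsOpen W) (hWeq : spEgress Φ W = spStrictEgress Φ W)
    (hx : (x, (0 : ℝ)) ∈ W) (hσ : spEgressTime Φ W x ≠ ⊤) :
    ∃ t ≥ 0, (Φ x 0 t, t) ∉ closure W := by
  have hegress := hWeq ▸ trajectory_spEgressTime_mem_spEgress hΦcont hΦ0 hW hx hσ
  obtain ⟨t, ht, hout⟩ := exists_trajectory_notMem_closure_of_mem_spStrictEgress hegress
  refine ⟨(spEgressTime Φ W x).toReal + t, by positivity, ?_⟩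
  rwa [hΦadd x 0 _ t ENNReal.toReal_nonneg ht.le, zero_add]

lemma eventually_spEgressTime_ne_top
    (hΦcont : ContinuousOn (fun q : M × ℝ × ℝ => Φ q.1 q.2.1 q.2.2) {q | 0 ≤ q.2.2})
    {T : ℝ} (hT : 0 ≤ T) (h : (Φ x 0 T, T) ∉ closure W) :
    ∀ᶠ y in 𝓝 x, spEgressTime Φ W y ≠ ⊤ := by
  have hcont : Continuous fun y => (Φ y 0 T, T) :=
    (continuousOn_uncurry_trajectory hΦcont).comp_continuous (f := fun y => (y, T)) (by fun_prop)
      fun _ => hT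
  filter_upwards [hcont.continuousAt.preimage_mem_nhds (isClosed_closure.isOpen_compl.mem_nhds h)]
    with y hy
  exact spEgressTime_ne_top_of_notMem hT fun hmem => hy (subset_closure hmem)

lemma eventually_spEgressTime_eq_top
    (hΦcont : ContinuousOn (fun q : M × ℝ × ℝ => Φ q.1 q.2.1 q.2.2) {q | 0 ≤ q.2.2})
    (hΦadd : ∀ (x : M) (t₀ t s : ℝ), 0 ≤ t → 0 ≤ s →
      Φ x t₀ (t + s) = Φ (Φ x t₀ t) (t₀ + t) s)
    (hW : IsOpen W) {T : ℝ} (hT : 0 ≤ T) (hx : ∀ t ∈ Icc 0 T, (Φ x 0 t, t) ∈ W)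
    {V : Set M} (hV : V ∈ 𝓝 (Φ x 0 T)) (hVW : ∀ z ∈ V, ∀ s ≥ 0, (Φ z T s, T + s) ∈ W) :
    ∀ᶠ y in 𝓝 x, spEgressTime Φ W y = ⊤ := by
  have hbefore : ∀ᶠ y in 𝓝 x, ∀ t ∈ Icc 0 T, 0 ≤ t → (Φ y 0 t, t) ∈ W :=
    isCompact_Icc.eventually_forall_of_forall_eventually fun t ht =>
      eventually_nhdsWithin_iff.mp <|
        continuousOn_uncurry_trajectory hΦcont (x, t) ht.1 (hW.mem_nhds (hx t ht))
  have hcont : Continuous fun y => Φ y 0 T :=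
    hΦcont.comp_continuous (f := fun y => (y, (0 : ℝ), T)) (by fun_prop) fun _ => hT
  filter_upwards [hbefore, hcont.continuousAt.preimage_mem_nhds hV] with y hy hyV
  refine spEgressTime_eq_top_iff.mpr fun t ht => ?_
  rcases le_total t T with htT | hTt
  · exact hy t ⟨ht, htT⟩ ht
  · have hsplit := hΦadd y 0 T (t - T) hT (sub_nonneg.mpr hTt)
    rw [zero_add, add_sub_cancel] at hsplit
    simpa [hsplit] using hVW _ hyV (t - T) (sub_nonneg.mpr hTt)

lemma eventually_spEgressTime_eq_top_of_tendsto
    (hΦcont : ContinuousOn (fun q : M × ℝ × ℝ => Φ q.1 q.2.1 q.2.2) {q | 0 ≤ q.2.2})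
    (hΦadd : ∀ (x : M) (t₀ t s : ℝ), 0 ≤ t → 0 ≤ s →
      Φ x t₀ (t + s) = Φ (Φ x t₀ t) (t₀ + t) s)
    (hW : IsOpen W) {V : Set M} (hVopen : IsOpen V)
    (hVW : ∀ z ∈ V, ∀ T ≥ (0 : ℝ), ∀ s ≥ (0 : ℝ), (Φ z T s, T + s) ∈ W)
    {x₀ : M} (hx₀ : x₀ ∈ V) (hσ : spEgressTime Φ W x = ⊤)
    (hx : Tendsto (fun t => Φ x 0 t) atTop (𝓝 x₀)) :
    ∀ᶠ y in 𝓝 x, spEgressTime Φ W y = ⊤ := by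
  obtain ⟨T, hTV, hT⟩ :=
    ((hx.eventually (hVopen.mem_nhds hx₀)).and (eventually_ge_atTop 0)).exists
  exact eventually_spEgressTime_eq_top hΦcont hΦadd hW hT
    (fun t ht => spEgressTime_eq_top_iff.mp hσ t ht.1) (hVopen.mem_nhds hTV) (hVW · · T hT)

lemma eventually_spEgressTime_eq_top_iff
    (hΦcont : ContinuousOn (fun q : M × ℝ × ℝ => Φ q.1 q.2.1 q.2.2) {q | 0 ≤ q.2.2})
    (hΦadd : ∀ (x : M) (t₀ t s : ℝ), 0 ≤ t → 0 ≤ s →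
      Φ x t₀ (t + s) = Φ (Φ x t₀ t) (t₀ + t) s)
    (hW : IsOpen W) {V : Set M} (hVopen : IsOpen V)
    (hVW : ∀ z ∈ V, ∀ T ≥ (0 : ℝ), ∀ s ≥ (0 : ℝ), (Φ z T s, T + s) ∈ W)
    {x₀ : M} (hx₀ : x₀ ∈ V)
    (htop : spEgressTime Φ W x = ⊤ → Tendsto (fun t => Φ x 0 t) atTop (𝓝 x₀))
    (hfin : spEgressTime Φ W x ≠ ⊤ → ∃ t ≥ 0, (Φ x 0 t, t) ∉ closure W) :
    ∀ᶠ y in 𝓝 x, (spEgressTime Φ W y = ⊤ ↔ spEgressTime Φ W x = ⊤) := by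
  by_cases hσ : spEgressTime Φ W x = ⊤
  · filter_upwards [eventually_spEgressTime_eq_top_of_tendsto hΦcont hΦadd hW hVopen hVW
      hx₀ hσ (htop hσ)] with y hy
    simp [hy, hσ]
  · obtain ⟨T, hT, hleave⟩ := hfin hσ
    filter_upwards [eventually_spEgressTime_ne_top hΦcont hT hleave] with y hy
    simp [hy, hσ]

end EgressTime

open scoped Classical

theorem wazewski_contradiction_argument_general
    {M : Type*} [TopologicalSpace M] (Φ : M → ℝ → ℝ → M)
    (hΦcont : ContinuousOn (fun q : M × ℝ × ℝ => Φ q.1 q.2.1 q.2.2) {q | 0 ≤ q.2.2})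
    (hΦ0 : ∀ x t₀, Φ x t₀ 0 = x)
    (hΦadd : ∀ (x : M) (t₀ t s : ℝ), 0 ≤ t → 0 ≤ s →
      Φ x t₀ (t + s) = Φ (Φ x t₀ t) (t₀ + t) s)
    (W : Set (M × ℝ)) (hWopen : IsOpen W)
    (hWeq : spEgress Φ W = spStrictEgress Φ W)
    (x₀ : M)
    (hequil : ∀ t₀ ≥ (0 : ℝ), ∀ t ≥ (0 : ℝ), Φ x₀ t₀ t = x₀)
    (hstab : ∀ U' : Set M, IsOpen U' → x₀ ∈ U' → ∃ V : Set M, IsOpen V ∧ x₀ ∈ V ∧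
      ∀ x ∈ V, ∀ t₀ ≥ (0 : ℝ), ∀ t ≥ (0 : ℝ), Φ x t₀ t ∈ U')
    (U : Set M) (hUopen : IsOpen U) (hx₀U : x₀ ∈ U)
    (hUW : (closure U) ×ˢ (Set.univ : Set ℝ) ⊆ W)
    (Γ : ℝ → M × ℝ) (hΓcont : ContinuousOn Γ (Set.Icc 0 1))
    (hΓW : ∀ s ∈ Set.Ioo (0 : ℝ) 1, Γ s ∈ timeSection W 0)
    (hΓ0 : Γ 0 = (x₀, 0))
    (hΓ1 : Γ 1 ∈ timeSection (spStrictEgress Φ W) 0) :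
    ((∀ s ∈ Set.Icc (0 : ℝ) 1, ∀ x : M, Γ s = (x, 0) → spEgressTime Φ W x = ⊤ →
        Filter.Tendsto (fun t => Φ x 0 t) Filter.atTop (nhds x₀)) →
      (IsConnected (Γ '' Set.Icc 0 1) ∧
       Γ 0 ≠ Γ 1 ∧
       ContinuousOn (fun p : M × ℝ => if spEgressTime Φ W p.1 = ⊤ then Γ 0 else Γ 1)
         (Γ '' Set.Icc 0 1) ∧
       Set.SurjOn (fun p : M × ℝ => if spEgressTime Φ W p.1 = ⊤ then Γ 0 else Γ 1)
         (Γ '' Set.Icc 0 1) {Γ 0, Γ 1}) ∧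
      False) ∧
    ∃ s ∈ Set.Icc (0 : ℝ) 1, ∃ x : M, Γ s = (x, 0) ∧
      spEgressTime Φ W x = ⊤ ∧
      ¬ Filter.Tendsto (fun t => Φ x 0 t) Filter.atTop (nhds x₀) := by
  have hsec : ∀ s ∈ Icc (0 : ℝ) 1, Γ s = ((Γ s).1, 0) := fun s hs => Prod.ext rfl <| by
    rcases hs.1.eq_or_lt with rfl | h0
    · simp [hΓ0]
    rcases hs.2.eq_or_lt with rfl | h1
    · exact hΓ1.2
    exact (hΓW s ⟨h0, h1⟩).2
  obtain ⟨V, hVopen, hx₀V, hV⟩ := hstab U hUopen hx₀U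
  have hVW : ∀ z ∈ V, ∀ T ≥ (0 : ℝ), ∀ s ≥ (0 : ℝ), (Φ z T s, T + s) ∈ W :=
    fun z hz T hT s hs => hUW ⟨subset_closure (hV z hz T hT s hs), trivial⟩
  have hσ₀ : spEgressTime Φ W x₀ = ⊤ := spEgressTime_eq_top_iff.mpr fun t ht => by
    simpa [hequil 0 le_rfl t ht] using hVW x₀ hx₀V 0 le_rfl t ht
  obtain ⟨T₁, hT₁, hleave₁⟩ : ∃ t ≥ 0, (Φ (Γ 1).1 0 t, t) ∉ closure W := by
    obtain ⟨t, ht, hout⟩ := exists_trajectory_notMem_closure_of_mem_spStrictEgress hΓ1.1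
    rw [hΓ1.2, zero_add] at hout
    exact ⟨t, ht.le, hout⟩
  have key (H : ∀ s ∈ Icc (0 : ℝ) 1, ∀ x : M, Γ s = (x, 0) →
      spEgressTime Φ W x = ⊤ → Tendsto (fun t => Φ x 0 t) atTop (𝓝 x₀)) : False := by
    have hleave (s : ℝ) (hs : s ∈ Icc (0 : ℝ) 1) (hσ : spEgressTime Φ W (Γ s).1 ≠ ⊤) :
        ∃ t ≥ 0, (Φ (Γ s).1 0 t, t) ∉ closure W := by
      rcases hs.1.eq_or_lt with rfl | h0
      · exact absurd (hΓ0 ▸ hσ₀) hσ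
      rcases hs.2.eq_or_lt with rfl | h1
      · exact ⟨T₁, hT₁, hleave₁⟩
      exact exists_trajectory_notMem_closure_of_spEgressTime_ne_top hΦcont hΦ0 hΦadd hWopen hWeq
        (hsec s hs ▸ (hΓW s ⟨h0, h1⟩).1) hσ
    have hσ_const := (isPreconnected_Icc.image _ hΓcont.fst).iff_of_eventually_iff
      (P := fun y => spEgressTime Φ W y = ⊤)
      (by
        rintro _ ⟨s, hs, rfl⟩
        exact nhdsWithin_le_nhds <| eventually_spEgressTime_eq_top_iff hΦcont hΦadd hWopen
          hVopen hVW hx₀V (H s hs _ (hsec s hs)) (hleave s hs))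
      (mem_image_of_mem _ (left_mem_Icc.mpr zero_le_one))
      (mem_image_of_mem _ (right_mem_Icc.mpr zero_le_one))
    exact (eventually_spEgressTime_ne_top hΦcont hT₁ hleave₁).self_of_nhds
      (hσ_const.mp (by simpa [hΓ0] using hσ₀))
  exact ⟨fun H => (key H).elim, by by_contra! H; exact key H⟩

/-- The contradiction argument in the proof of Theorem 2.13: under its hypotheses,
if every point `(x,0)` on `Γ` with `σ(x) = ∞` had `Φ_{0,t}(x) → x₀`, then the map
`Ω` sending `(x,0)` to `Γ(0)` when `σ(x) = ∞` and to `Γ(1)` when `σ(x) < ∞` would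
be a continuous surjection from the connected set `Γ([0,1])` onto the two-point
set `{Γ(0), Γ(1)}` — which is impossible; hence there is a point `(x,0)` on `Γ`
with `σ(x) = ∞` whose trajectory does not converge to `x₀`. -/
theorem wazewski_contradiction_argument
    {M : Type*} [TopologicalSpace M] (Φ : M → ℝ → ℝ → M)
    (hΦcont : ContinuousOn (fun q : M × ℝ × ℝ => Φ q.1 q.2.1 q.2.2) {q | 0 ≤ q.2.2})
    (hΦ0 : ∀ x t₀, Φ x t₀ 0 = x)
    (hΦadd : ∀ (x : M) (t₀ t s : ℝ), 0 ≤ t → 0 ≤ s →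
      Φ x t₀ (t + s) = Φ (Φ x t₀ t) (t₀ + t) s)
    (W : Set (M × ℝ)) (hWopen : IsOpen W)
    (hWeq : spEgress Φ W = spStrictEgress Φ W)
    (hW0e : (timeSection (spStrictEgress Φ W) 0).Nonempty)
    (x₀ : M)
    (hequil : ∀ t₀ ≥ (0 : ℝ), ∀ t ≥ (0 : ℝ), Φ x₀ t₀ t = x₀)
    (hstab : ∀ U' : Set M, IsOpen U' → x₀ ∈ U' → ∃ V : Set M, IsOpen V ∧ x₀ ∈ V ∧
      ∀ x ∈ V, ∀ t₀ ≥ (0 : ℝ), ∀ t ≥ (0 : ℝ), Φ x t₀ t ∈ U')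
    (U : Set M) (hUopen : IsOpen U) (hx₀U : x₀ ∈ U)
    (hUW : (closure U) ×ˢ (Set.univ : Set ℝ) ⊆ W)
    (Γ : ℝ → M × ℝ) (hΓcont : ContinuousOn Γ (Set.Icc 0 1))
    (hΓW : ∀ s ∈ Set.Ioo (0 : ℝ) 1, Γ s ∈ timeSection W 0)
    (hΓ0 : Γ 0 = (x₀, 0))
    (hΓ1 : Γ 1 ∈ timeSection (spStrictEgress Φ W) 0) :
    ((∀ s ∈ Set.Icc (0 : ℝ) 1, ∀ x : M, Γ s = (x, 0) → spEgressTime Φ W x = ⊤ →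
        Filter.Tendsto (fun t => Φ x 0 t) Filter.atTop (nhds x₀)) →
      (IsConnected (Γ '' Set.Icc 0 1) ∧
       Γ 0 ≠ Γ 1 ∧
       ContinuousOn (fun p : M × ℝ => if spEgressTime Φ W p.1 = ⊤ then Γ 0 else Γ 1)
         (Γ '' Set.Icc 0 1) ∧
       Set.SurjOn (fun p : M × ℝ => if spEgressTime Φ W p.1 = ⊤ then Γ 0 else Γ 1)
         (Γ '' Set.Icc 0 1) {Γ 0, Γ 1}) ∧
      False) ∧
    ∃ s ∈ Set.Icc (0 : ℝ) 1, ∃ x : M, Γ s = (x, 0) ∧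
      spEgressTime Φ W x = ⊤ ∧
      ¬ Filter.Tendsto (fun t => Φ x 0 t) Filter.atTop (nhds x₀) :=
  wazewski_contradiction_argument_general Φ hΦcont hΦ0 hΦadd W hWopen hWeq x₀ hequil hstab U hUopen
    hx₀U hUW Γ hΓcont hΓW hΓ0 hΓ1
end
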